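/- arXiv:2204.09152 — 6 statements merged into one kernel-verified Lean document; each statement's English description precedes it below -/
import Mathlib

section
/- Let R be a commutative ring and let B : R × R → R be a skew-symmetric biderivation with Jacobiator J(a,b,c) = B(B(a,b),c) + B(B(b,c),a) + B(B(c,a),b). Then for all x, y, z ∈ R and every integer d ≥ 1 one has the identity J(x^d, x^{d-1}y, x^{d-1}z) = d · x^{3d-3} · J(x,y,z). -/
/-- The formal identity `J(x^d, x^{d-1}y, x^{d-1}z) = d·x^{3d-3}·J(x,y,z)` for the
Jacobiator of a skew-symmetric biderivation on a commutative ring. -/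
theorem stmt1 (R : Type*) [CommRing R] (B : R → R → R)
    (haddl : ∀ a b c : R, B (a + b) c = B a c + B b c)
    (haddr : ∀ a b c : R, B a (b + c) = B a b + B a c)
    (hskew : ∀ a b : R, B a b = - B b a)
    (hleibr : ∀ a b c : R, B a (b * c) = B a b * c + B a c * b)
    (hleibl : ∀ a b c : R, B (a * b) c = B a c * b + B b c * a)
    (J : R → R → R → R)
    (hJ : ∀ a b c : R, J a b c = B (B a b) c + B (B b c) a + B (B c a) b)
    (x y z : R) (d : ℕ) (hd : 1 ≤ d) :
    J (x ^ d) (x ^ (d - 1) * y) (x ^ (d - 1) * z)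
      = d • (x ^ (3 * d - 3) * J x y z) := by
  have hB0 : ∀ c : R, B 0 c = 0 := by
    intro c
    have h := haddl 0 0 c
    rw [add_zero] at h
    linear_combination -h
  have hadd0 : ∀ u v c : R, u + v = 0 → B u c + B v c = 0 := by
    intro u v c h
    rw [← haddl, h, hB0]
  have hJcyc : ∀ a b c : R, J a b c = J b c a := by
    intro a b c
    simp only [hJ]; ring
  have hJd3 : ∀ a b u v : R, J a b (u * v) = J a b u * v + J a b v * u := by
    intro a b u v
    simp only [hJ, hleibr, hleibl, haddl, haddr]
    linear_combination B u a * hskew b v + B v a * hskew b u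
  have hJd2 : ∀ a u v c : R, J a (u * v) c = J a u c * v + J a v c * u := by
    intro a u v c
    rw [hJcyc a (u * v) c, hJcyc (u * v) c a, hJd3 c a u v, hJcyc c a u, hJcyc c a v]
  have hT2 : ∀ c : R, J x x c + J x x c = 0 := by
    intro c
    have h1 := hadd0 (B x x) (B x x) c (by linear_combination hskew x x)
    have h2 := hadd0 (B x c) (B c x) x (by linear_combination hskew x c)
    rw [hJ]
    linear_combination h1 + 2 * h2
  have hcast : ∀ (n : ℕ) (c : R), Even n → (n : R) * J x x c = 0 := by
    intro n c hn
    obtain ⟨k, hk⟩ := hn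
    subst hk
    push_cast
    linear_combination (k : R) * hT2 c
  have hpow3 : ∀ (a b : R) (n : ℕ), J a b (x ^ (n + 1)) = (n + 1) • (x ^ n * J a b x) := by
    intro a b n
    induction n with
    | zero => simp
    | succ n ih =>
      rw [show x ^ (n + 1 + 1) = x ^ (n + 1) * x from by ring, hJd3, ih]
      simp only [nsmul_eq_mul]
      push_cast
      ring
  have hpow1 : ∀ (b c : R) (n : ℕ), J (x ^ (n + 1)) b c = (n + 1) • (x ^ n * J x b c) := by
    intro b c n
    rw [hJcyc, hpow3 b c n, ← hJcyc x b c]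
  have hpow2 : ∀ (a c : R) (n : ℕ), J a (x ^ (n + 1)) c = (n + 1) • (x ^ n * J a x c) := by
    intro a c n
    rw [hJcyc a _ c, hpow1 c a n, ← hJcyc a x c]
  rcases d with _ | (_ | m)
  · omega
  · simp
  · rw [show m + 1 + 1 - 1 = m + 1 from rfl, show 3 * (m + 1 + 1) - 3 = 3 * m + 3 by omega]
    have h1 := hpow1 (x ^ (m + 1) * y) (x ^ (m + 1) * z) (m + 1)
    have h2 := hJd2 x (x ^ (m + 1)) y (x ^ (m + 1) * z)
    have h3 := hJd3 x (x ^ (m + 1)) (x ^ (m + 1)) z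
    have h4 := hJd3 x y (x ^ (m + 1)) z
    have h5 := hpow2 x (x ^ (m + 1)) m
    have h6 := hpow3 x x m
    have h7 := hpow2 x z m
    have h8 := hpow3 x y m
    have h9 : J x y x = J x x y := by rw [hJcyc x y x, hJcyc y x x]
    have hev : Even ((m + 1) * (m + 1 + 1)) := Nat.even_mul_succ_self (m + 1)
    have tx := hcast ((m + 1) * (m + 1 + 1)) x hev
    have ty := hcast ((m + 1) * (m + 1 + 1)) y hev
    have tz := hcast ((m + 1) * (m + 1 + 1)) z hev
    rw [h1, h2, h3, h4, h5, h6, h7, h8, h9]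
    simp only [nsmul_eq_mul]
    push_cast at tx ty tz ⊢
    linear_combination ((m : R) + 1) * x ^ (3 * m + 1) * z * y * tx +
      x ^ (3 * m + 2) * y * tz + x ^ (3 * m + 2) * z * ty
end

section
/- Let K be a field of characteristic zero, n ≥ 2, R = K[x_1,…,x_n], and let B : R × R → R be a skew-symmetric biderivation with Jacobiator J. Fix an integer d ≥ 1 and suppose that J(p,q,r) = 0 for all homogeneous polynomials p, q, r ∈ R of degree d. Then J(ℓ,ℓ',ℓ'') = 0 for all homogeneous linear forms ℓ, ℓ', ℓ'' ∈ R. -/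
open MvPolynomial

/-- If the Jacobiator of a skew-symmetric biderivation on `K[x_1,…,x_n]` (char K = 0)
vanishes on all homogeneous polynomials of a fixed degree `d ≥ 1`, then it vanishes on
all homogeneous linear forms. -/
theorem stmt3 (K : Type*) [Field K] [CharZero K] (n : ℕ) (hn : 2 ≤ n)
    (B : MvPolynomial (Fin n) K → MvPolynomial (Fin n) K → MvPolynomial (Fin n) K)
    (haddl : ∀ a b c, B (a + b) c = B a c + B b c)
    (haddr : ∀ a b c, B a (b + c) = B a b + B a c)
    (hskew : ∀ a b, B a b = - B b a)
    (hleibr : ∀ a b c, B a (b * c) = B a b * c + B a c * b)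
    (hleibl : ∀ a b c, B (a * b) c = B a c * b + B b c * a)
    (J : MvPolynomial (Fin n) K → MvPolynomial (Fin n) K → MvPolynomial (Fin n) K →
      MvPolynomial (Fin n) K)
    (hJ : ∀ a b c, J a b c = B (B a b) c + B (B b c) a + B (B c a) b)
    (d : ℕ) (hd : 1 ≤ d)
    (hJd : ∀ p q r : MvPolynomial (Fin n) K,
      p.IsHomogeneous d → q.IsHomogeneous d → r.IsHomogeneous d → J p q r = 0) :
    ∀ ℓ ℓ' ℓ'' : MvPolynomial (Fin n) K,
      ℓ.IsHomogeneous 1 → ℓ'.IsHomogeneous 1 → ℓ''.IsHomogeneous 1 →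
      J ℓ ℓ' ℓ'' = 0 := by
  -- basic facts
  have hB0l : ∀ c, B 0 c = 0 := by
    intro c
    have := haddl 0 0 c
    simp at this
    exact this
  have hB0r : ∀ a, B a 0 = 0 := by
    intro a
    have := haddr a 0 0
    simp at this
    exact this
  -- J vanishes when an argument is 0
  have hJ0₁ : ∀ b c, J 0 b c = 0 := by
    intro b c
    simp [hJ, hB0l, hB0r]
  -- cyclic symmetry
  have hcyc : ∀ a b c, J a b c = J b c a := by
    intro a b c; rw [hJ, hJ]; ring
  -- derivation in third slot
  have hder3 : ∀ a b c c', J a b (c * c') = J a b c * c' + J a b c' * c := by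
    intro a b c c'
    simp only [hJ, hleibr, hleibl, haddl]
    rw [hskew c b, hskew c' b]
    ring
  have hder1 : ∀ a a' b c, J (a * a') b c = J a b c * a' + J a' b c * a := by
    intro a a' b c
    rw [hcyc, hder3, hcyc a, hcyc a']
  -- power rule
  have hpow : ∀ (k : ℕ) (a b c), J (a ^ (k+1)) b c = (k+1) • (a ^ k * J a b c) := by
    intro k
    induction k with
    | zero => intro a b c; simp
    | succ m ih =>
      intro a b c
      rw [pow_succ, hder1, ih]
      push_cast [succ_nsmul]
      ring
  intro ℓ ℓ' ℓ'' h1 h2 h3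
  -- handle zero cases
  rcases eq_or_ne ℓ 0 with rfl | hℓ
  · exact hJ0₁ _ _
  rcases eq_or_ne ℓ' 0 with rfl | hℓ'
  · rw [hcyc]; exact hJ0₁ _ _
  rcases eq_or_ne ℓ'' 0 with rfl | hℓ''
  · rw [hcyc, hcyc]; exact hJ0₁ _ _
  obtain ⟨e, rfl⟩ : ∃ e, d = e + 1 := ⟨d - 1, by omega⟩
  have key : J (ℓ ^ (e+1)) (ℓ' ^ (e+1)) (ℓ'' ^ (e+1)) = 0 := by
    exact hJd _ _ _ (by simpa using h1.pow (e+1)) (by simpa using h2.pow (e+1))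
      (by simpa using h3.pow (e+1))
  rw [hpow, hcyc, hpow, hcyc, hpow] at key
  rw [hcyc ℓ''] at key
  simp only [nsmul_eq_mul, Nat.cast_add, Nat.cast_one] at key
  have hne : ((e : MvPolynomial (Fin n) K) + 1) ≠ 0 := by
    have : ((e + 1 : ℕ) : MvPolynomial (Fin n) K) ≠ 0 :=
      Nat.cast_ne_zero.mpr (Nat.succ_ne_zero e)
    simpa using this
  have key2 : J ℓ ℓ' ℓ'' *
      (((e : MvPolynomial (Fin n) K) + 1) ^ 3 * (ℓ ^ e * ℓ' ^ e * ℓ'' ^ e)) = 0 := by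
    linear_combination key
  rcases mul_eq_zero.mp key2 with h | h
  · exact h
  · exact absurd h (mul_ne_zero (pow_ne_zero _ hne)
      (mul_ne_zero (mul_ne_zero (pow_ne_zero _ hℓ) (pow_ne_zero _ hℓ')) (pow_ne_zero _ hℓ'')))
end

section
/- Let K be a field, n ≥ 2, R = K[x_1,…,x_n], and let M be an n×n matrix over R all of whose entries are homogeneous linear forms and which satisfies M ·ᵥ x = 0 as an identity in R^n, where x = (x_1,…,x_n) is the vector of variables. Then for every vector c = (c_1,…,c_n) ∈ K^n, writing ℓ = c_1 x_1 + … + c_n x_n, each entry of the row vector c · adj(M) (i.e., Σ_j c_j · adj(M)_{j,i} for each i) is divisible by ℓ in R. -/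
/-!
Pick `k` with `c k ≠ 0` and substitute `X k ↦ X k - c_k⁻¹ ℓ`, fixing the other variables. This
substitution `σ` is the identity modulo `ℓ`, and the substituted variable vector `g` is a nonzero
vector (as `n ≥ 2`) with `c ⬝ᵥ g = 0` that is killed by `σ M`. Replacing row `i` of `σ M` by `c`
therefore gives a singular matrix, whose determinant is the `i`-th entry of `c ᵥ* adj (σ M)`, that
is, `σ` of the `i`-th entry of `c ᵥ* adj M`. So that entry vanishes modulo `ℓ`.
-/

open MvPolynomial Matrix

namespace Matrix

variable {ι R : Type*} [Fintype ι] [DecidableEq ι] [CommRing R]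

theorem vecMul_adjugate_apply (N : Matrix ι ι R) (b : ι → R) (i : ι) :
    (b ᵥ* N.adjugate) i = (N.updateRow i b).det := by
  rw [← cramer_transpose_apply, cramer_eq_adjugate_mulVec, ← adjugate_transpose, mulVec_transpose]

theorem vecMul_adjugate_eq_zero_of_mulVec_eq_zero [IsDomain R] {N : Matrix ι ι R} {y : ι → R}
    (hy : y ≠ 0) (hNy : N *ᵥ y = 0) {b : ι → R} (hby : b ⬝ᵥ y = 0) : b ᵥ* N.adjugate = 0 := by
  funext i
  rw [vecMul_adjugate_apply, Pi.zero_apply, ← exists_mulVec_eq_zero_iff]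
  refine ⟨y, hy, funext fun j => ?_⟩
  by_cases hji : j = i
  · subst hji
    simpa [mulVec] using hby
  · simpa [mulVec, updateRow_ne hji] using congrFun hNy j

theorem _root_.RingHom.map_vecMul_adjugate {S : Type*} [CommRing S] (f : R →+* S)
    (N : Matrix ι ι R) (b : ι → R) (i : ι) :
    f ((b ᵥ* N.adjugate) i) = (f ∘ b ᵥ* (N.map f).adjugate) i := by
  rw [RingHom.map_vecMul, ← RingHom.mapMatrix_apply, RingHom.map_adjugate, RingHom.mapMatrix_apply]

end Matrix

namespace MvPolynomial

theorem aeval_sub_self_mem {σ R : Type*} [CommRing R] {I : Ideal (MvPolynomial σ R)}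
    {g : σ → MvPolynomial σ R} (hg : ∀ j, g j - X j ∈ I) (p : MvPolynomial σ R) :
    aeval g p - p ∈ I := by
  have hmod : (Ideal.Quotient.mkₐ R I).comp (aeval g) = Ideal.Quotient.mkₐ R I :=
    algHom_ext fun j => by simpa [Ideal.Quotient.eq] using hg j
  exact Ideal.Quotient.eq.mp (DFunLike.congr_fun hmod p)

variable {ι : Type*} [Fintype ι] [DecidableEq ι]

theorem vecMul_adjugate_mem_of_mulVec_X_eq_zero {R : Type*} [CommRing R] [IsDomain R]
    {M : Matrix ι ι (MvPolynomial ι R)} (hMX : M *ᵥ X = 0) {I : Ideal (MvPolynomial ι R)}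
    {g : ι → MvPolynomial ι R} (hgI : ∀ j, g j - X j ∈ I) (hg : g ≠ 0) {c : ι → R}
    (hcg : (C ∘ c) ⬝ᵥ g = 0) (i : ι) :
    (C ∘ c ᵥ* M.adjugate) i ∈ I := by
  have hMg : M.map (aeval g) *ᵥ g = 0 := by
    funext j
    have hj := congrArg (aeval g) (congrFun hMX j)
    simpa only [mulVec, dotProduct, map_sum, map_mul, aeval_X, Pi.zero_apply, map_zero,
      Matrix.map_apply] using hj
  have hC : ⇑(aeval g) ∘ (C ∘ c) = C ∘ c := by
    funext j
    simp
  have hσ : aeval g ((C ∘ c ᵥ* M.adjugate) i) = 0 := by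
    have hmap := (aeval g).toRingHom.map_vecMul_adjugate M (C ∘ c) i
    simp only [AlgHom.toRingHom_eq_coe, RingHom.coe_coe] at hmap
    rw [hmap, hC, vecMul_adjugate_eq_zero_of_mulVec_eq_zero hg hMg hcg, Pi.zero_apply]
  simpa only [hσ, zero_sub, neg_mem_iff] using aeval_sub_self_mem hgI ((C ∘ c ᵥ* M.adjugate) i)

theorem linearForm_dvd_vecMul_adjugate {K : Type*} [Field K] [Nontrivial ι]
    {M : Matrix ι ι (MvPolynomial ι K)} (hMX : M *ᵥ X = 0) (c : ι → K) (i : ι) :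
    (∑ j, C (c j) * X j) ∣ (C ∘ c ᵥ* M.adjugate) i := by
  set ℓ : MvPolynomial ι K := ∑ j, C (c j) * X j
  rcases eq_or_ne c 0 with rfl | hc
  · simp [Function.comp_def, ← Pi.zero_def]
  obtain ⟨k, hk : c k ≠ 0⟩ := Function.ne_iff.mp hc
  set g : ι → MvPolynomial ι K := fun j => X j - if j = k then C (c k)⁻¹ * ℓ else 0
  have hgℓ : ∀ j, g j - X j ∈ Ideal.span {ℓ} := fun j => by
    rw [sub_sub_cancel_left, neg_mem_iff]
    split_ifs
    · exact Ideal.mul_mem_left _ _ (Ideal.mem_span_singleton_self ℓ)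
    · exact zero_mem _
  have hg : g ≠ 0 := fun h => by
    obtain ⟨j, hjk⟩ := exists_ne k
    simpa [g, hjk, X_ne_zero] using congrFun h j
  have hcg : (C ∘ c) ⬝ᵥ g = 0 := by
    simp only [g, dotProduct, Function.comp_apply, mul_sub, mul_ite, mul_zero,
      Finset.sum_sub_distrib, Finset.sum_ite_eq', Finset.mem_univ, if_true]
    rw [← mul_assoc, ← map_mul, mul_inv_cancel₀ hk, map_one, one_mul, sub_self]
  exact Ideal.mem_span_singleton.mp (vecMul_adjugate_mem_of_mulVec_X_eq_zero hMX hgℓ hg hcg i)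

end MvPolynomial

theorem stmt4_general (K : Type*) [Field K] (n : ℕ) (hn : 2 ≤ n)
    (M : Matrix (Fin n) (Fin n) (MvPolynomial (Fin n) K))
    (hMx : M.mulVec (fun i => X i) = 0)
    (c : Fin n → K) :
    ∀ i, (∑ j, C (c j) * X j) ∣ ∑ j, C (c j) * M.adjugate j i :=
  have : Nontrivial (Fin n) := Fin.nontrivial_iff_two_le.mpr hn
  linearForm_dvd_vecMul_adjugate hMx c

/-- Lemma 2.3(i): if `M` is an `n×n` matrix of homogeneous linear forms over
`K[x_1,…,x_n]` with `M ·ᵥ x = 0`, then for any linear form `ℓ = Σ c_j x_j`, each entry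
of the row vector `c · adj(M)` is divisible by `ℓ`. -/
theorem stmt4 (K : Type*) [Field K] (n : ℕ) (hn : 2 ≤ n)
    (M : Matrix (Fin n) (Fin n) (MvPolynomial (Fin n) K))
    (hlin : ∀ i j, (M i j).IsHomogeneous 1)
    (hMx : M.mulVec (fun i => X i) = 0)
    (c : Fin n → K) :
    ∀ i, (∑ j, C (c j) * X j) ∣ ∑ j, C (c j) * M.adjugate j i :=
  stmt4_general K n hn M hMx c
end

section
/- Let K be a field, n ≥ 2, R = K[x_1,…,x_n], and let M be an n×n matrix over R all of whose entries are homogeneous linear forms and which satisfies M ·ᵥ x = 0 as an identity in R^n, where x = (x_1,…,x_n) is the vector of variables. Then there exists a unique vector f = (f_1,…,f_n) of polynomials in R, each f_i homogeneous of degree n-2 (or zero), such that adj(M) is the outer product of x and f, i.e., adj(M)_{j,i} = x_j · f_i for all i, j. -/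
open MvPolynomial

section Aux

variable {K : Type*} [Field K] {n : ℕ}

/-- If a square matrix over the polynomial ring kills the vector of variables,
its determinant vanishes. -/
lemma auxDetZero (hn : 0 < n) (N : Matrix (Fin n) (Fin n) (MvPolynomial (Fin n) K))
    (h : N.mulVec (fun i => X i) = 0) : N.det = 0 := by
  have h2 : (N.adjugate * N).mulVec (fun i => X i) = 0 := by
    rw [← Matrix.mulVec_mulVec, h, Matrix.mulVec_zero]
  rw [Matrix.adjugate_mul, Matrix.smul_mulVec, Matrix.one_mulVec] at h2
  have h3 := congrFun h2 ⟨0, hn⟩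
  simp only [Pi.smul_apply, smul_eq_mul, Pi.zero_apply, mul_eq_zero] at h3
  rcases h3 with h3 | h3
  · exact h3
  · exact absurd h3 (X_ne_zero _)

lemma auxUpdateDetZero (hn : 0 < n) (M : Matrix (Fin n) (Fin n) (MvPolynomial (Fin n) K))
    (hMx : M.mulVec (fun i => X i) = 0) (i : Fin n)
    (v : Fin n → MvPolynomial (Fin n) K)
    (hv : ∑ k, v k * X k = 0) :
    (M.updateRow i v).det = 0 := by
  apply auxDetZero hn
  funext r
  by_cases hr : r = i
  · subst hr
    simpa [Matrix.mulVec, dotProduct] using hv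
  · have := congrFun hMx r
    simpa [Matrix.mulVec, dotProduct, Matrix.updateRow_ne hr] using this

/-- Proportionality of the columns of the adjugate with the vector of variables. -/
lemma auxProp (hn : 0 < n) (M : Matrix (Fin n) (Fin n) (MvPolynomial (Fin n) K))
    (hMx : M.mulVec (fun i => X i) = 0) (i j j' : Fin n) :
    X j' * M.adjugate j i = X j * M.adjugate j' i := by
  rw [Matrix.adjugate_apply, Matrix.adjugate_apply,
    ← Matrix.det_updateRow_smul, ← Matrix.det_updateRow_smul]
  have hsplit : (X j' : MvPolynomial (Fin n) K) • (Pi.single j 1 : Fin n → MvPolynomial (Fin n) K)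
      = (X j : MvPolynomial (Fin n) K) • (Pi.single j' 1 : Fin n → MvPolynomial (Fin n) K)
        + ((X j' : MvPolynomial (Fin n) K) • (Pi.single j 1 : Fin n → MvPolynomial (Fin n) K)
          - (X j : MvPolynomial (Fin n) K) • (Pi.single j' 1 : Fin n → MvPolynomial (Fin n) K)) := by
    abel
  rw [hsplit, Matrix.det_updateRow_add]
  have hz : (M.updateRow i ((X j' : MvPolynomial (Fin n) K) • (Pi.single j 1 : Fin n → MvPolynomial (Fin n) K)
      - (X j : MvPolynomial (Fin n) K) • (Pi.single j' 1 : Fin n → MvPolynomial (Fin n) K))).det = 0 := by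
    apply auxUpdateDetZero hn M hMx
    classical
    simp only [Pi.sub_apply, Pi.smul_apply, smul_eq_mul, Pi.single_apply, mul_ite, mul_one,
      mul_zero, sub_mul, ite_mul, zero_mul]
    rw [Finset.sum_sub_distrib]
    simp [Finset.sum_ite_eq', mul_comm]
  rw [hz, add_zero]

/-- If `X a * p = X b * q` with `a ≠ b`, then `X b ∣ p`. -/
lemma auxDvd {a b : Fin n} (hab : a ≠ b) {p q : MvPolynomial (Fin n) K}
    (h : X a * p = X b * q) : X b ∣ p := by
  classical
  have hc : ∀ m : Fin n →₀ ℕ, m b = 0 → coeff m p = 0 := by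
    intro m hm
    have h1 : coeff (Finsupp.single a 1 + m) (X a * p) = coeff m p := coeff_X_mul m a p
    rw [h, coeff_X_mul'] at h1
    rw [if_neg] at h1
    · exact h1.symm
    · simp [Finsupp.mem_support_iff, Finsupp.add_apply, Finsupp.single_apply, hm, hab]
  rw [← support_sum_monomial_coeff p]
  apply Finset.dvd_sum
  intro m hm
  rw [X_dvd_monomial]
  right
  intro h0
  exact (mem_support_iff.mp hm) (hc m h0)

/-- Cancel a variable in a homogeneity statement. -/
lemma auxHomogCancel {p : MvPolynomial (Fin n) K} {j : Fin n} {d : ℕ}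
    (h : (X j * p).IsHomogeneous (d + 1)) : p.IsHomogeneous d := by
  intro m hm
  have h1 : coeff (Finsupp.single j 1 + m) (X j * p) ≠ 0 := by rwa [coeff_X_mul]
  have h2 := h h1
  rw [map_add] at h2
  have h3 : (Finsupp.weight 1) (Finsupp.single j 1) = 1 := by
    simp [Finsupp.weight_apply, Finsupp.sum_single_index]
  rw [h3] at h2
  omega

/-- Homogeneity of determinants. -/
lemma auxDetHomog (N : Matrix (Fin n) (Fin n) (MvPolynomial (Fin n) K))
    (d : Fin n → ℕ) (h : ∀ a b, (N a b).IsHomogeneous (d a)) :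
    N.det.IsHomogeneous (∑ a, d a) := by
  rw [Matrix.det_apply]
  apply IsHomogeneous.sum
  intro σ _
  have hp : (∏ b, N (σ b) b).IsHomogeneous (∑ a, d a) := by
    rw [← Equiv.sum_comp σ d]
    exact IsHomogeneous.prod Finset.univ _ _ (fun b _ => h (σ b) b)
  rcases Int.units_eq_one_or (Equiv.Perm.sign σ) with hs | hs <;> rw [hs]
  · rwa [one_smul]
  · rw [Units.neg_smul, one_smul]
    exact hp.neg

end Aux

/-- Lemma 2.3(ii): if `M` is an `n×n` matrix of homogeneous linear forms over
`K[x_1,…,x_n]` with `M ·ᵥ x = 0`, then there is a unique vector `f` of homogeneous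
polynomials of degree `n-2` such that `adj(M)_{j,i} = x_j · f_i`. -/
theorem stmt5 (K : Type*) [Field K] (n : ℕ) (hn : 2 ≤ n)
    (M : Matrix (Fin n) (Fin n) (MvPolynomial (Fin n) K))
    (hlin : ∀ i j, (M i j).IsHomogeneous 1)
    (hMx : M.mulVec (fun i => X i) = 0) :
    ∃! f : Fin n → MvPolynomial (Fin n) K,
      (∀ i, (f i).IsHomogeneous (n - 2)) ∧
      (∀ i j, M.adjugate j i = X j * f i) := by
  classical
  have hn0 : 0 < n := by omega
  set j0 : Fin n := ⟨0, by omega⟩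
  set j1 : Fin n := ⟨1, by omega⟩
  have hj01 : j1 ≠ j0 := by
    intro h
    have := congrArg Fin.val h
    simp [j0, j1] at this
  have hprop := auxProp hn0 M hMx
  -- existence of the quotients
  have hdvd : ∀ i, ∃ g, M.adjugate j0 i = X j0 * g := by
    intro i
    exact auxDvd hj01 (hprop i j0 j1)
  choose f hf using hdvd
  have hkey : ∀ i j, M.adjugate j i = X j * f i := by
    intro i j
    have h1 : X j0 * M.adjugate j i = X j * M.adjugate j0 i := hprop i j j0
    rw [hf i] at h1
    have h2 : X j0 * M.adjugate j i = X j0 * (X j * f i) := by rw [h1]; ring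
    exact mul_left_cancel₀ (X_ne_zero j0) h2
  -- homogeneity of adjugate entries
  have hadj : ∀ i j, (M.adjugate j i).IsHomogeneous (n - 1) := by
    intro i j
    rw [Matrix.adjugate_apply]
    have hsum : (∑ a : Fin n, if a = i then 0 else 1) = n - 1 := by
      classical
      simp [Finset.sum_ite, Finset.filter_ne', Finset.card_erase_of_mem, Finset.card_univ]
    have hentries : ∀ a b, ((M.updateRow i (Pi.single j 1)) a b).IsHomogeneous
        (if a = i then 0 else 1) := by
      intro a b
      by_cases ha : a = i
      · subst ha
        rw [Matrix.updateRow_self, if_pos rfl, Pi.single_apply]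
        split_ifs with hb
        · exact isHomogeneous_one _ _
        · exact isHomogeneous_zero _ _ _
      · rw [Matrix.updateRow_ne ha, if_neg ha]
        exact hlin a b
    have hhom := auxDetHomog (M.updateRow i (Pi.single j 1)) _ hentries
    rwa [hsum] at hhom
  have hfhom : ∀ i, (f i).IsHomogeneous (n - 2) := by
    intro i
    have h1 : (X j0 * f i).IsHomogeneous (n - 2 + 1) := by
      have := hadj i j0
      rw [hkey i j0] at this
      have he : n - 1 = n - 2 + 1 := by omega
      rwa [he] at this
    exact auxHomogCancel h1
  refine ⟨f, ⟨hfhom, hkey⟩, ?_⟩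
  rintro g ⟨hg1, hg2⟩
  funext i
  have := (hg2 i j0).symm.trans (hkey i j0)
  exact mul_left_cancel₀ (X_ne_zero j0) this
end

section
/- Let K be a field, n ≥ 2, R = K[x_1,…,x_n], and let M be an n×n matrix over R all of whose entries are homogeneous linear forms and which satisfies M ·ᵥ x = 0 as an identity in R^n, where x = (x_1,…,x_n) is the vector of variables. Let f = (f_1,…,f_n) be a vector of polynomials in R such that adj(M)_{j,i} = x_j · f_i for all i, j. If for some point a ∈ K^n the evaluated matrix M(a) ∈ Mat_{n×n}(K) (obtained by evaluating every entry at a) has rank at least n-1, then (f_1(a),…,f_n(a)) ≠ 0, i.e., f_i(a) ≠ 0 for some i. -/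
/-!
Evaluating at `a` commutes with taking adjugates, and `adj(M)(a)_{j,i} = a_j f_i(a)`, so it
suffices that a square matrix over a field of corank at most one has nonzero adjugate. Since
`adj (V A U) = adj U * adj A * adj V`, this reduces to the rank normal form of `A`, a diagonal
matrix of ones and zeros with at most one zero, whose adjugate has a nonzero diagonal entry.
-/

open MvPolynomial

namespace Matrix

theorem adjugate_diagonal_ne_zero {R m : Type*} [CommRing R] [IsDomain R] [Fintype m]
    [DecidableEq m] (v : m → R) (i : m) (hv : ∀ j ≠ i, v j ≠ 0) :
    (diagonal v).adjugate ≠ 0 := by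
  intro h
  have hii := congrFun (congrFun h i) i
  rw [adjugate_diagonal, diagonal_apply_eq, zero_apply, Finset.prod_eq_zero_iff] at hii
  obtain ⟨j, hj, hvj⟩ := hii
  exact hv j (Finset.ne_of_mem_erase hj) hvj

theorem adjugate_ne_zero_of_card_sub_one_le_rank {K m : Type*} [Field K] [Fintype m]
    [DecidableEq m] [Nonempty m] (A : Matrix m m K) (h : Fintype.card m - 1 ≤ A.rank) :
    A.adjugate ≠ 0 := by
  obtain ⟨V, U, e, -, -, hVAU⟩ := A.exists_rank_normal_form
  intro hA
  have hnormal : (V * A * U).adjugate = 0 := by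
    rw [adjugate_mul_distrib, adjugate_mul_distrib, hA, zero_mul, mul_zero]
  rw [hVAU, adjugate_submatrix_equiv_self, ← diagonal_one, ← diagonal_zero,
    fromBlocks_diagonal] at hnormal
  have hcorank : Fintype.card m - A.rank ≤ 1 := by omega
  obtain ⟨i, hi⟩ : ∃ i, ∀ j ≠ i, Sum.elim (fun _ : Fin A.rank ↦ (1 : K)) (fun _ ↦ 0) j ≠ 0 := by
    rcases Nat.eq_zero_or_pos (Fintype.card m - A.rank) with hfull | hdefect
    · refine ⟨e (Classical.arbitrary m), ?_⟩
      rintro (j | ⟨j, hj⟩) -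
      · simp
      · omega
    · refine ⟨Sum.inr ⟨0, hdefect⟩, ?_⟩
      rintro (j | ⟨j, hj⟩) hne
      · simp
      · exact absurd (by congr; omega) hne
  exact adjugate_diagonal_ne_zero _ i hi ((reindex e.symm e.symm).injective hnormal)

end Matrix

theorem stmt7_general (K : Type*) [Field K] (n : ℕ) (hn : 2 ≤ n)
    (M : Matrix (Fin n) (Fin n) (MvPolynomial (Fin n) K))
    (f : Fin n → MvPolynomial (Fin n) K)
    (hf : ∀ i j, M.adjugate j i = X j * f i)
    (a : Fin n → K)
    (hrank : n - 1 ≤ (M.map (eval a)).rank) :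
    ∃ i, eval a (f i) ≠ 0 := by
  have : Nonempty (Fin n) := ⟨⟨0, by omega⟩⟩
  have hadj : (M.map (eval a)).adjugate ≠ 0 :=
    Matrix.adjugate_ne_zero_of_card_sub_one_le_rank _ (by rwa [Fintype.card_fin])
  obtain ⟨j, i, hji⟩ : ∃ j i, (M.map (eval a)).adjugate j i ≠ 0 := by
    by_contra! h
    exact hadj (Matrix.ext h)
  refine ⟨i, fun hfi ↦ hji ?_⟩
  rw [← RingHom.mapMatrix_apply, ← RingHom.map_adjugate, RingHom.mapMatrix_apply,
    Matrix.map_apply, hf, map_mul, hfi, mul_zero]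

/-- Lemma 2.3(iv): if `M` is an `n×n` matrix of homogeneous linear forms over
`K[x_1,…,x_n]` with `M ·ᵥ x = 0`, `f` satisfies `adj(M)_{j,i} = x_j · f_i`, and the
matrix `M` evaluated at a point `a ∈ K^n` has rank at least `n-1`, then some
`f_i(a) ≠ 0`. -/
theorem stmt7 (K : Type*) [Field K] (n : ℕ) (hn : 2 ≤ n)
    (M : Matrix (Fin n) (Fin n) (MvPolynomial (Fin n) K))
    (hlin : ∀ i j, (M i j).IsHomogeneous 1)
    (hMx : M.mulVec (fun i => X i) = 0)
    (f : Fin n → MvPolynomial (Fin n) K)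
    (hf : ∀ i j, M.adjugate j i = X j * f i)
    (a : Fin n → K)
    (hrank : n - 1 ≤ (M.map (eval a)).rank) :
    ∃ i, eval a (f i) ≠ 0 :=
  stmt7_general K n hn M f hf a hrank
end

section
/- Let K be an infinite field, n ≥ 1, R = K[x_1,…,x_n], and let V₁ ⊂ R denote the K-vector space of homogeneous linear forms. Let σ : V₁ → R be a K-linear map such that for every ℓ ∈ V₁ the polynomial σ(ℓ) is divisible by ℓ in R. Then there exists a single polynomial f ∈ R such that σ(ℓ) = f · ℓ for every ℓ ∈ V₁. -/
/-!
Fix a nonzero `ℓ₀` with `σ ℓ₀ = f ℓ₀` and any `ℓ` with `σ ℓ = g ℓ`. At a point `a` where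
neither form vanishes, the form `ℓ₀ + t ℓ` with `t = -ℓ₀(a)/ℓ(a)` vanishes at `a`, hence so does
`σ(ℓ₀ + t ℓ) = f ℓ₀ + t g ℓ`, which gives `f(a) = g(a)`. So `(f - g) ℓ₀ ℓ` vanishes at every
point, hence is zero as `K` is infinite, and cancelling `ℓ₀` gives `σ ℓ = f ℓ`.
-/

open MvPolynomial

section

variable {K ι : Type*} [Field K] {M : Submodule K (MvPolynomial ι K)}
  (σ : M →ₗ[K] MvPolynomial ι K)

theorem eval_eq_of_map_eq_mul (hdiv : ∀ ℓ : M, (ℓ : MvPolynomial ι K) ∣ σ ℓ)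
    {ℓ₁ ℓ₂ : M} {f g : MvPolynomial ι K} (h₁ : σ ℓ₁ = f * ℓ₁) (h₂ : σ ℓ₂ = g * ℓ₂)
    {a : ι → K} (ha₁ : eval a (ℓ₁ : MvPolynomial ι K) ≠ 0)
    (ha₂ : eval a (ℓ₂ : MvPolynomial ι K) ≠ 0) :
    eval a f = eval a g := by
  set t := -eval a (ℓ₁ : MvPolynomial ι K) / eval a (ℓ₂ : MvPolynomial ι K)
  have ht : t * eval a (ℓ₂ : MvPolynomial ι K) = -eval a (ℓ₁ : MvPolynomial ι K) :=
    div_mul_cancel₀ _ ha₂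
  have hvanish : eval a (σ (ℓ₁ + t • ℓ₂)) = 0 := by
    obtain ⟨q, hq⟩ := hdiv (ℓ₁ + t • ℓ₂)
    rw [hq, map_mul, Submodule.coe_add, Submodule.coe_smul, map_add, smul_eval, ht,
      add_neg_cancel, zero_mul]
  rw [map_add, map_smul, h₁, h₂, map_add, smul_eval, map_mul, map_mul,
    ← mul_assoc, mul_right_comm t, ht] at hvanish
  exact mul_right_cancel₀ ha₁ (by linear_combination hvanish)

theorem map_eq_mul_of_map_eq_mul [Infinite K] (hdiv : ∀ ℓ : M, (ℓ : MvPolynomial ι K) ∣ σ ℓ)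
    {ℓ₀ : M} (hℓ₀ : (ℓ₀ : MvPolynomial ι K) ≠ 0) {f : MvPolynomial ι K}
    (hf : σ ℓ₀ = f * ℓ₀) (ℓ : M) : σ ℓ = f * ℓ := by
  obtain ⟨g, hg⟩ := hdiv ℓ
  rw [mul_comm] at hg
  have key : f * ℓ₀ * ℓ = g * ℓ₀ * ℓ := by
    refine MvPolynomial.funext fun a => ?_
    by_cases ha₀ : eval a (ℓ₀ : MvPolynomial ι K) = 0
    · simp [ha₀]
    by_cases ha : eval a (ℓ : MvPolynomial ι K) = 0
    · simp [ha]
    simp only [map_mul, eval_eq_of_map_eq_mul σ hdiv hf hg ha₀ ha]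
  have hfg : f * ℓ = g * ℓ := mul_right_cancel₀ hℓ₀ (by linear_combination key)
  rw [hg, hfg]

theorem exists_map_eq_mul [Infinite K] (hdiv : ∀ ℓ : M, (ℓ : MvPolynomial ι K) ∣ σ ℓ) :
    ∃ f : MvPolynomial ι K, ∀ ℓ : M, σ ℓ = f * ℓ := by
  by_cases hM : ∃ ℓ₀ : M, (ℓ₀ : MvPolynomial ι K) ≠ 0
  · obtain ⟨ℓ₀, hℓ₀⟩ := hM
    obtain ⟨f, hf⟩ := hdiv ℓ₀
    rw [mul_comm] at hf
    exact ⟨f, map_eq_mul_of_map_eq_mul σ hdiv hℓ₀ hf⟩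
  · push Not at hM
    refine ⟨0, fun ℓ => ?_⟩
    rw [show ℓ = 0 from Subtype.ext (hM ℓ), map_zero, zero_mul]

end

theorem stmt8_general (K : Type*) [Field K] [Infinite K] (n : ℕ)
    (σ : homogeneousSubmodule (Fin n) K 1 →ₗ[K] MvPolynomial (Fin n) K)
    (hdiv : ∀ ℓ : homogeneousSubmodule (Fin n) K 1,
      (ℓ : MvPolynomial (Fin n) K) ∣ σ ℓ) :
    ∃ f : MvPolynomial (Fin n) K,
      ∀ ℓ : homogeneousSubmodule (Fin n) K 1,
        σ ℓ = f * (ℓ : MvPolynomial (Fin n) K) :=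
  exists_map_eq_mul σ hdiv

/-- If `σ` is a `K`-linear map from the space of homogeneous linear forms to
`K[x_1,…,x_n]` (K infinite) such that `ℓ ∣ σ(ℓ)` for every linear form `ℓ`, then there
is a single polynomial `f` with `σ(ℓ) = f·ℓ` for all `ℓ`. -/
theorem stmt8 (K : Type*) [Field K] [Infinite K] (n : ℕ) (hn : 1 ≤ n)
    (σ : homogeneousSubmodule (Fin n) K 1 →ₗ[K] MvPolynomial (Fin n) K)
    (hdiv : ∀ ℓ : homogeneousSubmodule (Fin n) K 1,
      (ℓ : MvPolynomial (Fin n) K) ∣ σ ℓ) :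
    ∃ f : MvPolynomial (Fin n) K,
      ∀ ℓ : homogeneousSubmodule (Fin n) K 1,
        σ ℓ = f * (ℓ : MvPolynomial (Fin n) K) :=
  stmt8_general K n σ hdiv
end
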